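/- The trace on the fermion Fock space is represented by a Grassmann integral: for every A ∈ B(∧H), tr_{∧H}(A) = (-1)^{|M|} ∫D(Ψ̄,Ψ) Θ(A). In particular, for I = J ordered subsets, tr_{∧H}(c*_{i_1}···c*_{i_m} c_{i_1}···c_{i_m}) = (-1)^{m(m-1)/2} 2^{|M|-m}. -/

import Mathlib

open Finset Matrix
open scoped Classical ComplexOrder Kronecker

noncomputable section

namespace Grassmann

/-- Coefficient model of the Grassmann algebra over ℂ with generators indexed by a
linearly ordered finite type `ι`: an element is given by its coefficients in the
basis of increasingly ordered monomials, indexed by `Finset ι`. -/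
abbrev Car (ι : Type) := Finset ι → ℂ

variable {ι κ : Type} [LinearOrder ι] [LinearOrder κ]

/-- The unit (empty monomial). -/
def gone : Car ι := fun s => if s = ∅ then 1 else 0

/-- The sign produced when concatenating two increasing monomials. -/
def mulSign (s t : Finset ι) : ℂ :=
  (-1) ^ ((s ×ˢ t).filter fun p => p.2 < p.1).card

/-- The (ordinary, anticommutative) Grassmann product. -/
def gmul (f g : Car ι) : Car ι := fun u =>
  ∑ s ∈ u.powerset, mulSign s (u \ s) * f s * g (u \ s)

/-- A generator of the Grassmann algebra. -/
def gen (x : ι) : Car ι := fun s => if s = {x} then 1 else 0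

/-- Product of a list of Grassmann elements. -/
def lprod : List (Car ι) → Car ι := fun l => l.foldr gmul gone

/-- Powers with respect to the Grassmann product. -/
def gpow (f : Car ι) : ℕ → Car ι
  | 0 => gone
  | n + 1 => gmul f (gpow f n)

/-- The left derivation `δ/δx`. -/
def gderiv (x : ι) (f : Car ι) : Car ι := fun t =>
  if x ∈ t then 0
  else (-1) ^ (t.filter fun y => y < x).card * f (insert x t)

/-- The exponential of a Grassmann element (a finite sum by nilpotency). -/
def gexp [Fintype ι] (f : Car ι) : Car ι :=
  ∑ m ∈ Finset.range (2 * Fintype.card ι + 1), ((Nat.factorial m : ℂ)⁻¹) • gpow f m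

/-- The sign produced when relabelling generators along an injection. -/
def relabelSign (g : ι ↪ κ) (s : Finset ι) : ℂ :=
  (-1) ^ ((s ×ˢ s).filter fun p => p.1 < p.2 ∧ g p.2 < g p.1).card

/-- The algebra homomorphism induced by relabelling generators along an injection. -/
def relabel [Fintype ι] (g : ι ↪ κ) (f : Car ι) : Car κ := fun t =>
  ∑ s : Finset ι, if s.map g = t then relabelSign g s * f s else 0

variable (M : Type) [Fintype M] [LinearOrder M]

/-- Index type for the generators `ψ̄ᵢ` (`true`) and `ψᵢ` (`false`). -/
abbrev Idx := Bool ×ₗ M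

instance : Fintype (Idx M) := inferInstanceAs (Fintype (Bool × M))

/-- The generator `ψᵢ`. -/
def psi (i : M) : Car (Idx M) := gen (toLex (false, i))

/-- The generator `ψ̄ᵢ`. -/
def psibar (i : M) : Car (Idx M) := gen (toLex (true, i))

/-- The elements of a finite set in increasing order. -/
def msort (s : Finset M) : List M := s.sort (· ≤ ·)

/-- `Ψ_J = ψ_{j₁} ⋯ ψ_{j_n}` for the ordered set `J`. -/
def psiProd (J : Finset M) : Car (Idx M) := lprod ((msort M J).map (psi M))

/-- `Ψ̄_I = ψ̄_{i₁} ⋯ ψ̄_{i_m}` for the ordered set `I`. -/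
def psibarProd (I : Finset M) : Car (Idx M) := lprod ((msort M I).map (psibar M))

/-- The normal-ordered monomial `Ψ̄_I Ψ_J`. -/
def nmono (I J : Finset M) : Car (Idx M) := gmul (psibarProd M I) (psiProd M J)

/-- The Grassmann integral `∫ d(Ψ̄,Ψ) = ∏_{α∈M} δ/δψ̄_α δ/δψ_α`. -/
def gintegral (f : Car (Idx M)) : ℂ :=
  ((msort M univ).foldr
    (fun i g => gderiv (toLex (true, i)) (gderiv (toLex (false, i)) g)) f) ∅

/-- The pairing `(Ψ̄,Ψ) = ∑ᵢ ψ̄ᵢ ψᵢ`. -/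
def pairPsi : Car (Idx M) := ∑ i : M, gmul (psibar M i) (psi M i)

/-- The weight `e^{2(Ψ̄,Ψ)} = ∏_α (1 + 2 ψ̄_α ψ_α)`. -/
def weight : Car (Idx M) :=
  lprod ((msort M univ).map fun i => gone + (2 : ℂ) • gmul (psibar M i) (psi M i))

/-- The weighted Grassmann integral `∫ 𝒟(Ψ̄,Ψ) = ∫ d(Ψ̄,Ψ) e^{2(Ψ̄,Ψ)}`. -/
def wintegral (f : Car (Idx M)) : ℂ := gintegral M (gmul (weight M) f)

/-- Index type for the doubled algebra in the variables `ψ̄, ψ` (family `false`)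
and `φ̄, φ` (family `true`). -/
abbrev BIdx := Bool ×ₗ (Idx M)

instance : Fintype (BIdx M) := inferInstanceAs (Fintype (Bool × (Bool × M)))

/-- The (order-preserving) embedding of the `ψ`-variables into the doubled algebra. -/
def embPsi : Idx M ↪ BIdx M :=
  ⟨fun x => toLex (false, x), fun a b h => congrArg (fun z : BIdx M => (ofLex z).2) h⟩

/-- Substitution `μ(ψ̄,ψ) ↦ μ(ψ̄,φ)`. -/
def subMu : Idx M ↪ BIdx M :=
  ⟨fun x => toLex (!(ofLex x).1, x), fun a b h => congrArg (fun z : BIdx M => (ofLex z).2) h⟩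

/-- Substitution `η(ψ̄,ψ) ↦ η(φ̄,ψ)`. -/
def subEta : Idx M ↪ BIdx M :=
  ⟨fun x => toLex ((ofLex x).1, x), fun a b h => congrArg (fun z : BIdx M => (ofLex z).2) h⟩

/-- Generator `ψᵢ` in the doubled algebra. -/
def psiB (i : M) : Car (BIdx M) := gen (toLex (false, toLex (false, i)))
/-- Generator `ψ̄ᵢ` in the doubled algebra. -/
def psibarB (i : M) : Car (BIdx M) := gen (toLex (false, toLex (true, i)))
/-- Generator `φᵢ` in the doubled algebra. -/
def phiB (i : M) : Car (BIdx M) := gen (toLex (true, toLex (false, i)))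
/-- Generator `φ̄ᵢ` in the doubled algebra. -/
def phibarB (i : M) : Car (BIdx M) := gen (toLex (true, toLex (true, i)))

/-- Pairing `(Ā,B) = ∑ᵢ āᵢ bᵢ` in the doubled algebra. -/
def pairB (f g : M → Car (BIdx M)) : Car (BIdx M) := ∑ i : M, gmul (f i) (g i)

/-- The kernel `e^{-(Ψ̄,Ψ)} e^{(Ψ̄,Φ)} e^{-(Φ̄,Φ)} e^{(Φ̄,Ψ)}`. -/
def kernel : Car (BIdx M) :=
  gmul (gexp (-(pairB M (psibarB M) (psiB M))))
    (gmul (gexp (pairB M (psibarB M) (phiB M)))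
      (gmul (gexp (-(pairB M (phibarB M) (phiB M))))
        (gexp (pairB M (phibarB M) (psiB M)))))

/-- Integration over the `φ` variables, `∫ d(Φ̄,Φ)`. -/
def intPhi (f : Car (BIdx M)) : Car (BIdx M) :=
  ((msort M univ).foldr
    (fun i g => gderiv (toLex (true, toLex (true, i)))
      (gderiv (toLex (true, toLex (false, i))) g)) f)

/-- Reading off the result (in the `ψ` variables only) after `φ`-integration. -/
def projBack (f : Car (BIdx M)) : Car (Idx M) := fun s => f (s.map (embPsi M))

/-- The star product
`(μ⋆η)(ψ̄,ψ) = ∫ d(Φ̄,Φ) μ(ψ̄,φ) η(φ̄,ψ) e^{-(Ψ̄,Ψ)} e^{(Ψ̄,Φ)} e^{-(Φ̄,Φ)} e^{(Φ̄,Ψ)}`. -/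
def gstar (μ η : Car (Idx M)) : Car (Idx M) :=
  projBack M (intPhi M
    (gmul (relabel (subMu M) μ) (gmul (relabel (subEta M) η) (kernel M))))

/-- Star product of a list. -/
def lstar (l : List (Car (Idx M))) : Car (Idx M) := l.foldr (gstar M) (gone)

/-- Swapping `ψᵢ ↔ ψ̄ᵢ`. -/
def barSwap : Idx M → Idx M := fun x => toLex (!(ofLex x).1, (ofLex x).2)

/-- The sign of the involution on a basis monomial. -/
def involSign (s : Finset (Idx M)) : ℂ :=
  (-1) ^ ((s ×ˢ s).filter fun p => p.1 < p.2 ∧ barSwap M p.1 < barSwap M p.2).card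

/-- The involution `*` of the Grassmann algebra: antilinear, `ψᵢ* = ψ̄ᵢ`, `ψ̄ᵢ* = ψᵢ`,
reversing products. -/
def ginvol (f : Car (Idx M)) : Car (Idx M) := fun t =>
  involSign M (t.image (barSwap M)) * (starRingEnd ℂ) (f (t.image (barSwap M)))

/-! ### The fermion Fock space `∧H` and the normal-ordering map `Θ` -/

/-- The fermion Fock space over `H = ℂ^M`, in the occupation basis. -/
abbrev Fock := Finset M → ℂ

/-- The creation operator `c*ᵢ`. -/
def createL (i : M) : Fock M →ₗ[ℂ] Fock M where
  toFun f := fun s =>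
    if i ∈ s then (-1) ^ (((s.erase i)).filter fun j => j < i).card * f (s.erase i) else 0
  map_add' f g := by funext s; by_cases h : i ∈ s <;> simp [h, mul_add]
  map_smul' c f := by funext s; by_cases h : i ∈ s <;> simp [h] <;> ring

/-- The annihilation operator `cᵢ`. -/
def annihL (i : M) : Fock M →ₗ[ℂ] Fock M where
  toFun f := fun s =>
    if i ∈ s then 0 else (-1) ^ (s.filter fun j => j < i).card * f (insert i s)
  map_add' f g := by funext s; by_cases h : i ∈ s <;> simp [h, mul_add]
  map_smul' c f := by funext s; by_cases h : i ∈ s <;> simp [h] <;> ring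

/-- The normal-ordered operator monomial `c*_{i₁}⋯c*_{i_m} c_{j₁}⋯c_{j_n}`
for ordered sets `I`, `J`. -/
def cOp (I J : Finset M) : Fock M →ₗ[ℂ] Fock M :=
  ((msort M I).map (createL M)).prod * ((msort M J).map (annihL M)).prod

/-- The adjoint of an operator on the Fock space. -/
def adjOp (A : Fock M →ₗ[ℂ] Fock M) : Fock M →ₗ[ℂ] Fock M :=
  Matrix.toLin (Pi.basisFun ℂ (Finset M)) (Pi.basisFun ℂ (Finset M))
    ((LinearMap.toMatrix (Pi.basisFun ℂ (Finset M)) (Pi.basisFun ℂ (Finset M)) A).conjTranspose)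

/-! ### Density matrices of a Grassmann density -/

/-- The one-particle density matrix `γ_th`, `⟨ψ_k, γ_th ψ_l⟩ = ∫𝒟 th*⋆th⋆ψ̄_l⋆ψ_k`. -/
def gammaM (th : Car (Idx M)) : Matrix M M ℂ := fun k l =>
  wintegral M (gstar M (gstar M (ginvol M th) th) (gstar M (psibar M l) (psi M k)))

/-- The two-particle density matrix `Γ_th`,
`⟨ψ_m⊗ψ_n, Γ_th (ψ_l⊗ψ_k)⟩ = ∫𝒟 th*⋆th⋆ψ̄_k⋆ψ̄_l⋆ψ_m⋆ψ_n`. -/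
def GammaM (th : Car (Idx M)) : Matrix (M × M) (M × M) ℂ := fun p q =>
  wintegral M (gstar M (gstar M (ginvol M th) th)
    (gstar M (psibar M q.2) (gstar M (psibar M q.1) (gstar M (psi M p.1) (psi M p.2)))))

/-- Positive semi-definiteness of a complex matrix: `⟨x, A x⟩ ≥ 0` for all vectors. -/
def PSDvec {n : Type} [Fintype n] (A : Matrix n n ℂ) : Prop :=
  ∀ x : n → ℂ, 0 ≤ star x ⬝ᵥ A.mulVec x

/-- The exchange operator `Ex (f⊗g) = g⊗f` on `H⊗H`. -/
def ExM : Matrix (M × M) (M × M) ℂ := fun p q =>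
  if p.1 = q.2 ∧ p.2 = q.1 then 1 else 0

end Grassmann

/-!
Both sides of the trace formula are linear in `A`, and `Θ` carries the normal-ordered monomials
`c*_I c_J` to the Grassmann monomials `Ψ̄_I Ψ_J`, which span the Grassmann algebra; so it suffices
to compare the two sides on `c*_I c_J`.

On the Fock side, `c*_I c_J` has a nonzero diagonal entry at the occupation vector `e_t` only if
`I = J ⊆ t`, and that entry is `(-1)^{m(m-1)/2}`; there are `2^{|M|-m}` such `t`.

On the Grassmann side, `∫ d(Ψ̄,Ψ)` reads off the coefficient of the top monomial up to the sign
`(-1)^{|M|(|M|-1)/2}`. Expanding `e^{2(Ψ̄,Ψ)} = ∑_S 2^{|S|} ∏_{i ∈ S} ψ̄ᵢψᵢ`, the product with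
`Ψ̄_I Ψ_J` reaches the top monomial only when `I = J` and `S = Iᶜ`.
-/

namespace Grassmann

lemma choose_two_succ (n : ℕ) : (n + 1).choose 2 = n.choose 2 + n := by
  rw [Nat.choose_succ_succ', Nat.choose_one_right, add_comm]

lemma choose_two_add (m d : ℕ) : (m + d).choose 2 = m.choose 2 + d.choose 2 + m * d := by
  induction d with
  | zero => simp
  | succ d ih => rw [← add_assoc, choose_two_succ, choose_two_succ, ih]; ring

lemma sdiff_union_eq_self_iff {α : Type} [DecidableEq α] {I J t : Finset α} (hJ : J ⊆ t)
    (hI : Disjoint I (t \ J)) : t \ J ∪ I = t ↔ I = J := by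
  constructor
  · intro h
    ext x
    have hx := congr(x ∈ $h)
    have hd := fun hxI : x ∈ I => disjoint_left.1 hI hxI
    have hs := @hJ x
    simp only [mem_union, mem_sdiff] at hx hd
    tauto
  · rintro rfl
    exact sdiff_union_of_subset hJ

section Algebra

variable {ι κ : Type} [LinearOrder ι] [LinearOrder κ]

def monomial (s : Finset ι) : Car ι := fun t => if t = s then 1 else 0

lemma monomial_eq_single (s : Finset ι) : monomial s = Pi.single s 1 := by
  funext t
  simp [monomial, Pi.single_apply]

lemma gone_eq_monomial : (gone : Car ι) = monomial ∅ := rfl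

lemma gen_eq_monomial (x : ι) : gen x = monomial {x} := rfl

lemma mulSign_eq_one {s t : Finset ι} (h : ∀ a ∈ s, ∀ b ∈ t, a ≤ b) : mulSign s t = 1 := by
  rw [mulSign, filter_false_of_mem, card_empty, pow_zero]
  rintro ⟨a, b⟩ hab
  rw [mem_product] at hab
  exact not_lt.2 (h a hab.1 b hab.2)

lemma mulSign_eq_neg_one_pow {s t : Finset ι} (h : ∀ a ∈ s, ∀ b ∈ t, b < a) :
    mulSign s t = (-1) ^ (#s * #t) := by
  rw [mulSign, filter_true_of_mem, card_product]
  rintro ⟨a, b⟩ hab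
  rw [mem_product] at hab
  exact h a hab.1 b hab.2

lemma mulSign_union_left {s₁ s₂ : Finset ι} (t : Finset ι) (h : Disjoint s₁ s₂) :
    mulSign (s₁ ∪ s₂) t = mulSign s₁ t * mulSign s₂ t := by
  have hdisj : Disjoint {p ∈ s₁ ×ˢ t | p.2 < p.1} {p ∈ s₂ ×ˢ t | p.2 < p.1} :=
    disjoint_filter_filter (disjoint_product.2 (Or.inl h))
  rw [mulSign, mulSign, mulSign, union_product, filter_union, card_union_of_disjoint hdisj, pow_add]

lemma mulSign_union_right (s : Finset ι) {t₁ t₂ : Finset ι} (h : Disjoint t₁ t₂) :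
    mulSign s (t₁ ∪ t₂) = mulSign s t₁ * mulSign s t₂ := by
  have hdisj : Disjoint {p ∈ s ×ˢ t₁ | p.2 < p.1} {p ∈ s ×ˢ t₂ | p.2 < p.1} :=
    disjoint_filter_filter (disjoint_product.2 (Or.inr h))
  rw [mulSign, mulSign, mulSign, product_union, filter_union, card_union_of_disjoint hdisj, pow_add]

lemma mulSign_mul_self (s t : Finset ι) : mulSign s t * mulSign s t = 1 := by
  rw [mulSign, ← pow_add, ← two_mul, pow_mul, neg_one_sq, one_pow]

lemma mulSign_image_of_strictMono {f : ι → κ} (hf : StrictMono f) (s t : Finset ι) :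
    mulSign (s.image f) (t.image f) = mulSign s t := by
  rw [mulSign, mulSign, ← prodMap_image_product, filter_image,
    card_image_of_injective _ (hf.injective.prodMap hf.injective)]
  simp [hf.lt_iff_lt]

lemma gmul_monomial_left (A : Finset ι) (f : Car ι) (u : Finset ι) :
    gmul (monomial A) f u = if A ⊆ u then mulSign A (u \ A) * f (u \ A) else 0 := by
  simp only [gmul, monomial, mul_ite, mul_one, mul_zero, ite_mul, zero_mul, sum_ite_eq',
    mem_powerset]

lemma gmul_monomial_right (f : Car ι) (B u : Finset ι) :
    gmul f (monomial B) u = if B ⊆ u then mulSign (u \ B) B * f (u \ B) else 0 := by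
  have hcompl : ∀ s ∈ u.powerset, (u \ s = B ↔ s = u \ B ∧ B ⊆ u) := fun s hs => by
    rw [mem_powerset] at hs
    constructor
    · rintro rfl
      exact ⟨(Finset.sdiff_sdiff_eq_self hs).symm, sdiff_subset⟩
    · rintro ⟨rfl, hB⟩
      exact Finset.sdiff_sdiff_eq_self hB
  simp only [gmul, monomial, mul_ite, mul_one, mul_zero]
  rw [sum_congr rfl fun s hs => if_congr (hcompl s hs) rfl rfl]
  by_cases hB : B ⊆ u
  · simp only [hB, and_true, if_true]
    rw [sum_ite_eq' u.powerset (u \ B), if_pos (mem_powerset.2 sdiff_subset),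
      Finset.sdiff_sdiff_eq_self hB]
  · simp [hB]

lemma monomial_gmul_monomial (A B : Finset ι) :
    gmul (monomial A) (monomial B)
      = if Disjoint A B then mulSign A B • monomial (A ∪ B) else 0 := by
  funext u
  rw [gmul_monomial_left]
  by_cases hAB : Disjoint A B
  · rw [if_pos hAB, Pi.smul_apply, smul_eq_mul]
    by_cases hu : u = A ∪ B
    · subst hu
      simp [monomial, union_sdiff_cancel_left hAB]
    · have : ¬ (A ⊆ u ∧ u \ A = B) := fun ⟨hA, h⟩ => hu (by rw [← h, union_sdiff_of_subset hA])
      by_cases hA : A ⊆ u <;> simp_all [monomial]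
  · rw [if_neg hAB, Pi.zero_apply]
    split_ifs with hA
    · have : u \ A ≠ B := fun h => hAB (h ▸ disjoint_sdiff)
      simp [monomial, this]
    · rfl

lemma gmul_add_left (f g h : Car ι) : gmul (f + g) h = gmul f h + gmul g h := by
  funext u
  simp only [gmul, Pi.add_apply, ← sum_add_distrib]
  exact sum_congr rfl fun s _ => by ring

lemma gmul_smul_left (c : ℂ) (f h : Car ι) : gmul (c • f) h = c • gmul f h := by
  funext u
  simp only [gmul, Pi.smul_apply, smul_eq_mul, mul_sum]
  exact sum_congr rfl fun s _ => by ring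

lemma gmul_add_right (f g h : Car ι) : gmul f (g + h) = gmul f g + gmul f h := by
  funext u
  simp only [gmul, Pi.add_apply, ← sum_add_distrib]
  exact sum_congr rfl fun s _ => by ring

lemma gmul_smul_right (c : ℂ) (f h : Car ι) : gmul f (c • h) = c • gmul f h := by
  funext u
  simp only [gmul, Pi.smul_apply, smul_eq_mul, mul_sum]
  exact sum_congr rfl fun s _ => by ring

lemma gmul_sum_right {α : Type} (f : Car ι) (s : Finset α) (g : α → Car ι) :
    gmul f (∑ a ∈ s, g a) = ∑ a ∈ s, gmul f (g a) := by
  funext u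
  simp only [gmul, Finset.sum_apply, mul_sum]
  exact sum_comm

lemma lprod_map_gen {l : List ι} (hl : l.Pairwise (· < ·)) :
    lprod (l.map gen) = monomial l.toFinset := by
  induction l with
  | nil => rfl
  | cons x l ih =>
    obtain ⟨hx, hl⟩ := List.pairwise_cons.1 hl
    have hxl : ∀ y ∈ l.toFinset, x < y := fun y hy => hx y (List.mem_toFinset.1 hy)
    change gmul (gen x) (lprod (l.map gen)) = _
    rw [ih hl, gen_eq_monomial, monomial_gmul_monomial,
      if_pos (disjoint_singleton_left.2 fun h => lt_irrefl x (hxl x h)),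
      mulSign_eq_one (by simpa using fun y hy => (hxl y hy).le), one_smul,
      List.toFinset_cons, insert_eq]

lemma gone_gmul (f : Car ι) : gmul gone f = f := by
  funext u
  rw [gone_eq_monomial, gmul_monomial_left, if_pos (empty_subset u), sdiff_empty,
    mulSign_eq_one (by simp), one_mul]

end Algebra

section Supports

variable (M : Type) [LinearOrder M]

abbrev psiIdx (i : M) : Idx M := toLex (false, i)

abbrev psibarIdx (i : M) : Idx M := toLex (true, i)

/-- The support of `∏_{i ∈ S} ψ̄ᵢ ψᵢ`. -/
def pairs (S : Finset M) : Finset (Idx M) := S.image (psiIdx M) ∪ S.image (psibarIdx M)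

def nmonoSupp (I J : Finset M) : Finset (Idx M) := I.image (psibarIdx M) ∪ J.image (psiIdx M)

variable {M}

omit [LinearOrder M] in
lemma finset_ext_toLex {s t : Finset (Idx M)} (h : ∀ b j, toLex (b, j) ∈ s ↔ toLex (b, j) ∈ t) :
    s = t :=
  ext fun x => h (ofLex x).1 (ofLex x).2

lemma psiIdx_strictMono : StrictMono (psiIdx M) := fun _ _ h => by
  simpa [Prod.Lex.toLex_lt_toLex] using h

lemma psibarIdx_strictMono : StrictMono (psibarIdx M) := fun _ _ h => by
  simpa [Prod.Lex.toLex_lt_toLex] using h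

@[simp]
lemma toLex_mem_pairs {S : Finset M} {b : Bool} {j : M} : toLex (b, j) ∈ pairs M S ↔ j ∈ S := by
  cases b <;> simp [pairs]

@[simp]
lemma toLex_mem_nmonoSupp {I J : Finset M} {b : Bool} {j : M} :
    toLex (b, j) ∈ nmonoSupp M I J ↔ j ∈ cond b I J := by
  cases b <;> simp [nmonoSupp]

lemma disjoint_image_psiIdx_psibarIdx (S T : Finset M) :
    Disjoint (S.image (psiIdx M)) (T.image (psibarIdx M)) := by
  simp [disjoint_left]

lemma card_pairs (S : Finset M) : #(pairs M S) = 2 * #S := by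
  rw [pairs, card_union_of_disjoint (disjoint_image_psiIdx_psibarIdx S S),
    card_image_of_injective _ psiIdx_strictMono.injective,
    card_image_of_injective _ psibarIdx_strictMono.injective, two_mul]

lemma pairs_injective : Function.Injective (pairs M) := fun S T h => by
  ext j
  simpa using congr(toLex (false, j) ∈ $h)

lemma pairs_insert (i : M) (S : Finset M) : pairs M (insert i S) = pairs M {i} ∪ pairs M S :=
  finset_ext_toLex fun b j => by simp

lemma disjoint_pairs {S T : Finset M} (h : Disjoint S T) : Disjoint (pairs M S) (pairs M T) := by
  rw [disjoint_left]
  intro x hS hT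
  obtain ⟨⟨b, j⟩, rfl⟩ := toLex.surjective x
  exact disjoint_left.1 h (toLex_mem_pairs.1 hS) (toLex_mem_pairs.1 hT)

lemma nmonoSupp_self (I : Finset M) : nmonoSupp M I I = pairs M I :=
  finset_ext_toLex fun b j => by cases b <;> simp

lemma mulSign_pairs_pairs (S T : Finset M) :
    mulSign (pairs M S) (pairs M T) = (-1) ^ (#S * #T) := by
  have hpsi_psibar : ∀ A B : Finset M,
      mulSign (A.image (psiIdx M)) (B.image (psibarIdx M)) = 1 :=
    fun A B => mulSign_eq_one (by simp [Prod.Lex.toLex_le_toLex])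
  have hpsibar_psi :
      mulSign (S.image (psibarIdx M)) (T.image (psiIdx M)) = (-1) ^ (#S * #T) := by
    rw [mulSign_eq_neg_one_pow (by simp [Prod.Lex.toLex_lt_toLex]),
      card_image_of_injective _ psibarIdx_strictMono.injective,
      card_image_of_injective _ psiIdx_strictMono.injective]
  rw [pairs, pairs, mulSign_union_left _ (disjoint_image_psiIdx_psibarIdx S S),
    mulSign_union_right _ (disjoint_image_psiIdx_psibarIdx T T),
    mulSign_union_right _ (disjoint_image_psiIdx_psibarIdx T T), hpsi_psibar, hpsibar_psi,
    mulSign_image_of_strictMono psiIdx_strictMono,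
    mulSign_image_of_strictMono psibarIdx_strictMono]
  linear_combination (-1 : ℂ) ^ (#S * #T) * mulSign_mul_self S T

variable [Fintype M]

lemma compl_pairs (S : Finset M) : (pairs M S)ᶜ = pairs M Sᶜ :=
  finset_ext_toLex fun b j => by simp

lemma exists_nmonoSupp_eq (u : Finset (Idx M)) : ∃ I J, nmonoSupp M I J = u :=
  ⟨({i | toLex (true, i) ∈ u} : Finset M), ({j | toLex (false, j) ∈ u} : Finset M),
    finset_ext_toLex fun b j => by cases b <;> simp⟩

end Supports

section Monomials

variable {M : Type} [LinearOrder M]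

lemma lprod_map_gen_msort {ι : Type} [LinearOrder ι] {f : M → ι} (hf : StrictMono f)
    (s : Finset M) : lprod ((msort M s).map (gen ∘ f)) = monomial (s.image f) := by
  rw [msort, ← List.map_map, lprod_map_gen ((sortedLT_sort s).pairwise.map f fun _ _ h => hf h)]
  congr 1
  ext
  simp

lemma nmono_eq (I J : Finset M) :
    nmono M I J = (-1 : ℂ) ^ (#I * #J) • monomial (nmonoSupp M I J) := by
  have hbar : psibarProd M I = monomial (I.image (psibarIdx M)) :=
    lprod_map_gen_msort psibarIdx_strictMono I
  have hpsi : psiProd M J = monomial (J.image (psiIdx M)) :=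
    lprod_map_gen_msort psiIdx_strictMono J
  rw [nmono, hbar, hpsi, monomial_gmul_monomial,
    if_pos (disjoint_image_psiIdx_psibarIdx J I).symm,
    mulSign_eq_neg_one_pow (by simp [Prod.Lex.toLex_lt_toLex]),
    card_image_of_injective _ psibarIdx_strictMono.injective,
    card_image_of_injective _ psiIdx_strictMono.injective, nmonoSupp]

lemma gmul_psibar_psi (i : M) :
    gmul (psibar M i) (psi M i) = (-1 : ℂ) • monomial (pairs M {i}) := by
  have hsupp : ({toLex (true, i)} ∪ {toLex (false, i)} : Finset (Idx M)) = pairs M {i} :=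
    finset_ext_toLex fun b j => by cases b <;> simp
  rw [psibar, psi, gen_eq_monomial, gen_eq_monomial, monomial_gmul_monomial, if_pos (by simp),
    mulSign_eq_neg_one_pow (by simp [Prod.Lex.toLex_lt_toLex]), hsupp, card_singleton,
    card_singleton, mul_one, pow_one]

end Monomials

section Integral

variable {M : Type} [LinearOrder M]

lemma gderiv_gderiv_apply_pairs {i : M} {t : Finset M} (ht : ∀ j ∈ t, j < i) (g : Car (Idx M)) :
    gderiv (toLex (true, i)) (gderiv (toLex (false, i)) g) (pairs M t)
      = (-1) ^ #t * g (pairs M (insert i t)) := by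
  have hi : i ∉ t := fun h => lt_irrefl i (ht i h)
  have hbar : (pairs M t).filter (· < toLex (true, i)) = pairs M t := by
    refine filter_true_of_mem fun x hx => ?_
    obtain ⟨⟨b, j⟩, rfl⟩ := toLex.surjective x
    cases b <;> simp_all [Prod.Lex.toLex_lt_toLex]
  have hpsi : (insert (toLex (true, i)) (pairs M t)).filter (· < toLex (false, i))
      = t.image (psiIdx M) := by
    refine finset_ext_toLex fun b j => ?_
    cases b
    · simpa [Prod.Lex.toLex_lt_toLex] using ht j
    · simp [Prod.Lex.toLex_lt_toLex]
  have hins : insert (toLex (false, i)) (insert (toLex (true, i)) (pairs M t))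
      = pairs M (insert i t) := by
    refine finset_ext_toLex fun b j => ?_
    cases b <;> simp
  have hpsi_notMem : toLex (false, i) ∉ insert (toLex (true, i)) (pairs M t) := by simp [hi]
  simp only [gderiv, toLex_mem_pairs, hi, if_false, hpsi_notMem, hbar, hpsi, hins, card_pairs,
    card_image_of_injective _ psiIdx_strictMono.injective, ← mul_assoc, ← pow_add]
  rw [pow_add, pow_mul, neg_one_sq, one_pow, one_mul]

lemma foldr_gderiv_apply_pairs {l : List M} (hl : l.Pairwise (· < ·)) {t : Finset M}
    (ht : ∀ i ∈ l, ∀ j ∈ t, j < i) (f : Car (Idx M)) :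
    (l.foldr (fun i g => gderiv (toLex (true, i)) (gderiv (toLex (false, i)) g)) f) (pairs M t)
      = (-1) ^ (l.length * #t + l.length.choose 2) * f (pairs M (t ∪ l.toFinset)) := by
  induction l generalizing t with
  | nil => simp
  | cons i l ih =>
    obtain ⟨hi, hl⟩ := List.pairwise_cons.1 hl
    have hit : i ∉ t := fun h => lt_irrefl i (ht i List.mem_cons_self i h)
    have ht' : ∀ k ∈ l, ∀ j ∈ insert i t, j < k := fun k hk j hj => by
      rcases mem_insert.1 hj with rfl | hj
      · exact hi k hk
      · exact (ht i List.mem_cons_self j hj).trans (hi k hk)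
    rw [List.foldr_cons, gderiv_gderiv_apply_pairs (ht i List.mem_cons_self), ih hl ht',
      card_insert_of_notMem hit, List.toFinset_cons, insert_union, ← union_insert, ← mul_assoc,
      ← pow_add, List.length_cons, choose_two_succ]
    congr 2
    ring

lemma gintegral_eq [Fintype M] (f : Car (Idx M)) :
    gintegral M f = (-1) ^ (Fintype.card M).choose 2 * f univ := by
  have hempty : (∅ : Finset (Idx M)) = pairs M ∅ := by simp [pairs]
  have huniv : pairs M univ = univ := finset_ext_toLex fun b j => by simp
  rw [gintegral, hempty, msort, foldr_gderiv_apply_pairs (sortedLT_sort _).pairwise (by simp),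
    empty_union, sort_toFinset, huniv, length_sort, card_empty, mul_zero, zero_add,
    card_univ]

end Integral

section Weight

variable {M : Type} [LinearOrder M]

variable (M) in
def weightFactor (i : M) : Car (Idx M) := gone + (2 : ℂ) • gmul (psibar M i) (psi M i)

/-- The factor `(-2)^{|S|}` comes from `gmul_psibar_psi`, the sign `(-1)^{C(|S|,2)}` from
multiplying the monomials `monomial (pairs M {i})`, `i ∈ S` (`mulSign_pairs_pairs`). -/
lemma lprod_map_weightFactor {l : List M} (hl : l.Nodup) :
    lprod (l.map (weightFactor M))
      = ∑ S ∈ l.toFinset.powerset,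
          ((-2 : ℂ) ^ #S * (-1) ^ (#S).choose 2) • monomial (pairs M S) := by
  induction l with
  | nil => simp [lprod, gone_eq_monomial, pairs]
  | cons i l ih =>
    obtain ⟨hi, hl⟩ := List.nodup_cons.1 hl
    have hi : i ∉ l.toFinset := by simpa using hi
    have hfactor : weightFactor M i = gone + (-2 : ℂ) • monomial (pairs M {i}) := by
      rw [weightFactor, gmul_psibar_psi, smul_smul]
      norm_num
    have hterm : ∀ S ∈ l.toFinset.powerset,
        gmul (monomial (pairs M {i}))
            (((-2 : ℂ) ^ #S * (-1) ^ (#S).choose 2) • monomial (pairs M S))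
          = ((-2 : ℂ) ^ #S * (-1) ^ (#S).choose 2 * (-1) ^ #S)
            • monomial (pairs M (insert i S)) := by
      intro S hS
      have hiS : i ∉ S := fun h => hi (mem_powerset.1 hS h)
      have hdisj : Disjoint (pairs M {i}) (pairs M S) :=
        disjoint_pairs (disjoint_singleton_left.2 hiS)
      rw [gmul_smul_right, monomial_gmul_monomial, if_pos hdisj, smul_smul, mulSign_pairs_pairs,
        ← pairs_insert, card_singleton, one_mul]
    change gmul (weightFactor M i) (lprod (l.map (weightFactor M))) = _
    rw [hfactor, ih hl, gmul_add_left, gone_gmul, gmul_smul_left, gmul_sum_right,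
      sum_congr rfl hterm, List.toFinset_cons, sum_powerset_insert hi, smul_sum]
    congr 1
    refine sum_congr rfl fun S hS => ?_
    have hiS : i ∉ S := fun h => hi (mem_powerset.1 hS h)
    rw [smul_smul, card_insert_of_notMem hiS, choose_two_succ]
    congr 1
    ring

variable [Fintype M]

lemma weight_eq : weight M
    = ∑ S : Finset M, ((-2 : ℂ) ^ #S * (-1) ^ (#S).choose 2) • monomial (pairs M S) := by
  change lprod ((msort M univ).map (weightFactor M)) = _
  rw [msort, lprod_map_weightFactor (sort_nodup _ _), sort_toFinset, powerset_univ]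

lemma weight_apply_pairs (S : Finset M) :
    weight M (pairs M S) = (-2 : ℂ) ^ #S * (-1) ^ (#S).choose 2 := by
  rw [weight_eq, Finset.sum_apply, sum_eq_single S (fun T _ hT => ?_) (by simp)]
  · simp [monomial]
  · simp [monomial, pairs_injective.ne (Ne.symm hT)]

lemma weight_apply_eq_zero {u : Finset (Idx M)} (hu : ∀ S, pairs M S ≠ u) : weight M u = 0 := by
  rw [weight_eq, Finset.sum_apply]
  exact sum_eq_zero fun S _ => by simp [monomial, (hu S).symm]

end Weight

/-- The sign bookkeeping of `neg_one_pow_card_mul_wintegral_nmono`, with `m = |I|` and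
`m + d = |M|`. -/
lemma neg_one_pow_wintegral_sign (m d : ℕ) :
    (-1 : ℂ) ^ (m + d) * (-1) ^ (m + d).choose 2 * (-1) ^ (m * m) * (-1) ^ (d * m) * (-1) ^ d
      * (-1) ^ d.choose 2 = (-1) ^ m.choose 2 := by
  obtain ⟨k, hk⟩ : Even (m * m + m) := by simpa [mul_add] using Nat.even_mul_succ_self m
  have hexp : m + d + (m + d).choose 2 + m * m + d * m + d + d.choose 2
      = m.choose 2 + 2 * (k + d + d.choose 2 + m * d) := by
    rw [choose_two_add]
    linarith
  simp only [← pow_add]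
  rw [hexp, pow_add, pow_mul, neg_one_sq, one_pow, mul_one]

section WeightedIntegral

variable (M : Type) [Fintype M] [LinearOrder M]

def wintegralₗ : Car (Idx M) →ₗ[ℂ] ℂ where
  toFun := wintegral M
  map_add' f g := by
    simp only [wintegral, gintegral_eq, gmul_add_right, Pi.add_apply]
    ring
  map_smul' c f := by
    simp only [wintegral, gintegral_eq, gmul_smul_right, Pi.smul_apply, smul_eq_mul,
      RingHom.id_apply]
    ring

variable {M}

lemma wintegral_smul_monomial (c : ℂ) (B : Finset (Idx M)) :
    wintegral M (c • monomial B) = (-1) ^ (Fintype.card M).choose 2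
      * (c * (mulSign Bᶜ B * weight M Bᶜ)) := by
  rw [wintegral, gintegral_eq, gmul_smul_right, Pi.smul_apply, smul_eq_mul, gmul_monomial_right,
    if_pos (subset_univ B), ← compl_eq_univ_sdiff]

lemma neg_one_pow_card_mul_wintegral_nmono (I J : Finset M) :
    (-1) ^ Fintype.card M * wintegral M (nmono M I J)
      = if I = J then (-1) ^ (#I).choose 2 * 2 ^ (Fintype.card M - #I) else 0 := by
  rw [nmono_eq, wintegral_smul_monomial]
  split_ifs with hIJ
  · subst hIJ
    obtain ⟨d, hd⟩ : ∃ d, Fintype.card M = #I + d := ⟨_, (Nat.add_sub_of_le (card_le_univ I)).symm⟩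
    rw [nmonoSupp_self, compl_pairs, mulSign_pairs_pairs, weight_apply_pairs, card_compl, hd,
      Nat.add_sub_cancel_left, ← neg_one_pow_wintegral_sign #I d, neg_pow (2 : ℂ)]
    ring
  · rw [weight_apply_eq_zero, mul_zero, mul_zero, mul_zero, mul_zero]
    intro S hS
    apply hIJ
    ext j
    have hbar := congr(toLex (true, j) ∈ $hS)
    have hpsi := congr(toLex (false, j) ∈ $hS)
    simp only [toLex_mem_pairs, mem_compl, toLex_mem_nmonoSupp, cond_true, cond_false] at hbar hpsi
    rw [← not_iff_not, ← hbar, hpsi]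

variable (M)

lemma span_range_nmono :
    Submodule.span ℂ (Set.range fun p : Finset M × Finset M => nmono M p.1 p.2) = ⊤ := by
  rw [eq_top_iff, ← (Pi.basisFun ℂ (Finset (Idx M))).span_eq, Submodule.span_le]
  rintro _ ⟨u, rfl⟩
  obtain ⟨I, J, rfl⟩ := exists_nmonoSupp_eq u
  have hmono : Pi.basisFun ℂ _ (nmonoSupp M I J) = (-1 : ℂ) ^ (#I * #J) • nmono M I J := by
    rw [nmono_eq, smul_smul, ← pow_add, ← two_mul, pow_mul, neg_one_sq, one_pow, one_smul,
      Pi.basisFun_apply, monomial_eq_single]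
  rw [SetLike.mem_coe, hmono]
  exact Submodule.smul_mem _ _ (Submodule.subset_span ⟨(I, J), rfl⟩)

end WeightedIntegral

section Fock

variable {M : Type} [LinearOrder M]

lemma annihL_single (i : M) (t : Finset M) :
    annihL M i (Pi.single t 1) = if i ∈ t
      then (-1 : ℂ) ^ #{x ∈ t | x < i} • Pi.single (t.erase i) 1 else 0 := by
  funext s
  by_cases hit : i ∈ t
  · by_cases his : i ∈ s
    · have : s ≠ t.erase i := fun h => notMem_erase i t (h ▸ his)
      simp [annihL, his, hit, this]
    · have : insert i s = t ↔ s = t.erase i :=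
        ⟨fun h => h ▸ (erase_insert his).symm, fun h => h ▸ insert_erase hit⟩
      simp only [annihL, LinearMap.coe_mk, AddHom.coe_mk, his, hit, if_true, if_false,
        Pi.single_apply, this, Pi.smul_apply, smul_eq_mul, mul_ite, mul_one, mul_zero]
      split_ifs with hs
      · subst hs
        rw [filter_erase, erase_eq_of_notMem (by simp)]
      · rfl
  · have : insert i s ≠ t := fun h => hit (h ▸ mem_insert_self i s)
    simp [annihL, hit, this]

lemma createL_single (i : M) (u : Finset M) :
    createL M i (Pi.single u 1) = if i ∈ u then 0
      else (-1 : ℂ) ^ #{x ∈ u | x < i} • Pi.single (insert i u) 1 := by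
  funext s
  by_cases hiu : i ∈ u
  · have : s.erase i ≠ u := fun h => notMem_erase i s (h ▸ hiu)
    simp [createL, hiu, this]
  · by_cases his : i ∈ s
    · have : s.erase i = u ↔ s = insert i u :=
        ⟨fun h => h ▸ (insert_erase his).symm, fun h => h ▸ erase_insert hiu⟩
      simp only [createL, LinearMap.coe_mk, AddHom.coe_mk, his, hiu, if_true, if_false,
        Pi.single_apply, this, Pi.smul_apply, smul_eq_mul, mul_ite, mul_one, mul_zero]
      split_ifs with hs
      · subst hs
        rw [erase_insert hiu]
      · rfl
    · have : s ≠ insert i u := fun h => his (h ▸ mem_insert_self i u)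
      simp [createL, his, hiu, this]

lemma prod_annihL_single {l : List M} (hl : l.Pairwise (· < ·)) (t : Finset M) :
    (l.map (annihL M)).prod (Pi.single t 1) = if l.toFinset ⊆ t
      then (-1 : ℂ) ^ (∑ j ∈ l.toFinset, #{x ∈ t | x < j}) • Pi.single (t \ l.toFinset) 1
      else 0 := by
  induction l with
  | nil => simp
  | cons j l ih =>
    obtain ⟨hj, hl⟩ := List.pairwise_cons.1 hl
    have hjl : j ∉ l.toFinset := fun h => lt_irrefl j (hj j (List.mem_toFinset.1 h))
    rw [List.map_cons, List.prod_cons, Module.End.mul_apply, ih hl, List.toFinset_cons]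
    by_cases hlt : l.toFinset ⊆ t
    · by_cases hjt : j ∈ t
      · have hfilter : {x ∈ t \ l.toFinset | x < j} = {x ∈ t | x < j} := by
          ext x
          simp only [mem_filter, mem_sdiff, List.mem_toFinset]
          exact ⟨fun h => ⟨h.1.1, h.2⟩, fun h => ⟨⟨h.1, fun hx => (hj x hx).asymm h.2⟩, h.2⟩⟩
        rw [if_pos hlt, if_pos (insert_subset hjt hlt), map_smul, annihL_single,
          if_pos (mem_sdiff.2 ⟨hjt, hjl⟩), smul_smul, hfilter, ← pow_add, sum_insert hjl,
          add_comm, sdiff_insert]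
      · rw [if_pos hlt, if_neg (fun h => hjt (insert_subset_iff.1 h).1), map_smul, annihL_single,
          if_neg (fun h => hjt (mem_sdiff.1 h).1), smul_zero]
    · rw [if_neg hlt, if_neg (fun h => hlt (insert_subset_iff.1 h).2), map_zero]

lemma prod_createL_single {l : List M} (hl : l.Pairwise (· < ·)) (u : Finset M) :
    (l.map (createL M)).prod (Pi.single u 1) = if Disjoint l.toFinset u
      then (-1 : ℂ) ^ (∑ i ∈ l.toFinset, #{x ∈ u | x < i}) • Pi.single (u ∪ l.toFinset) 1
      else 0 := by
  induction l with
  | nil => simp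
  | cons i l ih =>
    obtain ⟨hi, hl⟩ := List.pairwise_cons.1 hl
    have hil : i ∉ l.toFinset := fun h => lt_irrefl i (hi i (List.mem_toFinset.1 h))
    rw [List.map_cons, List.prod_cons, Module.End.mul_apply, ih hl, List.toFinset_cons]
    by_cases hlu : Disjoint l.toFinset u
    · by_cases hiu : i ∈ u
      · rw [if_pos hlu, if_neg (fun h => (disjoint_insert_left.1 h).1 hiu), map_smul,
          createL_single, if_pos (mem_union_left _ hiu), smul_zero]
      · have hfilter : {x ∈ u ∪ l.toFinset | x < i} = {x ∈ u | x < i} := by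
          ext x
          simp only [mem_filter, mem_union, List.mem_toFinset]
          exact ⟨fun h => ⟨h.1.resolve_right fun hx => (hi x hx).asymm h.2, h.2⟩,
            fun h => ⟨Or.inl h.1, h.2⟩⟩
        rw [if_pos hlu, if_pos (disjoint_insert_left.2 ⟨hiu, hlu⟩), map_smul, createL_single,
          if_neg (by simp [hiu, hil]), smul_smul, hfilter, ← pow_add, sum_insert hil,
          add_comm, union_insert]
    · rw [if_neg hlu, if_neg (fun h => hlu (disjoint_insert_left.1 h).2), map_zero]

lemma sum_card_filter_lt (I : Finset M) : ∑ j ∈ I, #{x ∈ I | x < j} = (#I).choose 2 := by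
  induction I using Finset.induction_on_max with
  | empty => simp
  | insert a s hlt ih =>
    have has : a ∉ s := fun h => lt_irrefl a (hlt a h)
    have hfilter : ∀ j ∈ s, #{x ∈ insert a s | x < j} = #{x ∈ s | x < j} := fun j hj => by
      rw [filter_insert, if_neg (hlt j hj).asymm]
    rw [sum_insert has, sum_congr rfl hfilter, ih, filter_insert, if_neg (lt_irrefl a),
      filter_true_of_mem hlt, card_insert_of_notMem has, choose_two_succ, add_comm]

lemma neg_one_pow_sum_card_filter_lt {I t : Finset M} (hI : I ⊆ t) :
    (-1 : ℂ) ^ (∑ j ∈ I, #{x ∈ t | x < j}) * (-1) ^ (∑ i ∈ I, #{x ∈ t \ I | x < i})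
      = (-1) ^ (#I).choose 2 := by
  have hsplit : ∀ j, #{x ∈ t | x < j} = #{x ∈ t \ I | x < j} + #{x ∈ I | x < j} := fun j => by
    rw [← card_union_of_disjoint (disjoint_filter_filter sdiff_disjoint), ← filter_union,
      sdiff_union_of_subset hI]
  rw [sum_congr rfl fun j _ => hsplit j, sum_add_distrib, sum_card_filter_lt, ← pow_add,
    add_right_comm, ← two_mul, pow_add, pow_mul, neg_one_sq, one_pow, one_mul]

lemma cOp_single_apply_self (I J t : Finset M) :
    cOp M I J (Pi.single t 1) t = if I = J ∧ I ⊆ t then (-1 : ℂ) ^ (#I).choose 2 else 0 := by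
  unfold cOp msort
  rw [Module.End.mul_apply, prod_annihL_single (sortedLT_sort J).pairwise, sort_toFinset]
  by_cases hJ : J ⊆ t
  · rw [if_pos hJ, map_smul, prod_createL_single (sortedLT_sort I).pairwise, sort_toFinset]
    by_cases hI : Disjoint I (t \ J)
    · rw [if_pos hI, smul_smul, Pi.smul_apply, smul_eq_mul, Pi.single_apply]
      simp only [@eq_comm _ t, sdiff_union_eq_self_iff hJ hI]
      by_cases hIJ : I = J
      · subst hIJ
        rw [if_pos rfl, if_pos ⟨rfl, hJ⟩, mul_one, neg_one_pow_sum_card_filter_lt hJ]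
      · rw [if_neg hIJ, if_neg fun h => hIJ h.1, mul_zero]
    · rw [if_neg hI, smul_zero, Pi.zero_apply, if_neg]
      rintro ⟨rfl, -⟩
      exact hI disjoint_sdiff
  · rw [if_neg hJ, map_zero, Pi.zero_apply, if_neg]
    rintro ⟨rfl, hI⟩
    exact hJ hI

variable [Fintype M]

lemma trace_eq_sum_single_apply (A : Fock M →ₗ[ℂ] Fock M) :
    LinearMap.trace ℂ (Fock M) A = ∑ t, A (Pi.single t 1) t := by
  rw [LinearMap.trace_eq_matrix_trace ℂ (Pi.basisFun ℂ (Finset M)), Matrix.trace]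
  simp

lemma trace_cOp (I J : Finset M) :
    LinearMap.trace ℂ (Fock M) (cOp M I J)
      = if I = J then (-1) ^ (#I).choose 2 * 2 ^ (Fintype.card M - #I) else 0 := by
  simp only [trace_eq_sum_single_apply, cOp_single_apply_self]
  by_cases hIJ : I = J
  · subst hIJ
    have hIcc : ({t | I ⊆ t} : Finset (Finset M)) = Icc I univ := by ext; simp
    simp only [true_and, if_true]
    rw [← sum_filter, hIcc, sum_const, card_Icc_finset (subset_univ I), card_univ, nsmul_eq_mul]
    push_cast
    ring
  · simp [hIJ]

end Fock

end Grassmann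

open Grassmann in
/-- the trace on the fermion Fock space is a Grassmann integral:
`tr(A) = (-1)^{|M|} ∫𝒟(Ψ̄,Ψ) Θ(A)`, and in particular
`tr(c*_{i₁}⋯c*_{i_m}c_{i₁}⋯c_{i_m}) = (-1)^{m(m-1)/2} 2^{|M|-m}`. -/
theorem statement13 (M : Type) [Fintype M] [LinearOrder M]
    (Θ : (Fock M →ₗ[ℂ] Fock M) → Car (Idx M))
    (hlin : IsLinearMap ℂ Θ) (hbij : Function.Bijective Θ)
    (hmono : ∀ I J : Finset M, Θ (cOp M I J) = nmono M I J) :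
    (∀ A : Fock M →ₗ[ℂ] Fock M,
      LinearMap.trace ℂ (Fock M) A =
        (-1 : ℂ) ^ (Fintype.card M) * wintegral M (Θ A)) ∧
    (∀ I : Finset M,
      LinearMap.trace ℂ (Fock M) (cOp M I I) =
        (-1 : ℂ) ^ (I.card * (I.card - 1) / 2) * 2 ^ (Fintype.card M - I.card)) := by
  refine ⟨fun A => ?_, fun I => by rw [trace_cOp, if_pos rfl, Nat.choose_two_right]⟩
  let e := LinearEquiv.ofBijective (hlin.mk' Θ) hbij
  have htrace : LinearMap.trace ℂ (Fock M) ∘ₗ e.symm.toLinearMap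
      = (-1 : ℂ) ^ Fintype.card M • wintegralₗ M := by
    refine LinearMap.ext_on_range (span_range_nmono M) fun p => ?_
    have hcOp : e.symm (nmono M p.1 p.2) = cOp M p.1 p.2 :=
      e.symm_apply_eq.2 (hmono p.1 p.2).symm
    simp only [LinearMap.comp_apply, LinearEquiv.coe_coe, hcOp, trace_cOp, LinearMap.smul_apply,
      smul_eq_mul]
    exact (neg_one_pow_card_mul_wintegral_nmono p.1 p.2).symm
  have hA := congr($htrace (e A))
  rwa [LinearMap.comp_apply, LinearEquiv.coe_coe, e.symm_apply_apply] at hA
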